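/- If x̂ ∈ S is a weak efficient solution of (P) and both the weak Abadie data qualification (WADQ) and the closed cone constraint qualification (CCCQ) hold at x̂, then the weak KKT condition holds at x̂. -/

import Mathlib

/-!
If the weak KKT condition failed, the compact convex set `conv F(x̂)` (each `∂f_i(x̂)` is a
nonempty convex compact set) would be disjoint from the closed convex cone `-G_*(x̂)` (CCCQ),
and a separating hyperplane would give a direction `d` with `⟪ξ, d⟫ < 0` on `F(x̂)` and
`⟪η, d⟫ ≤ 0` on `G(x̂)`. By WADQ, `d` is tangent to `S`. By the max formula
`f_i'(x̂; d) = max_{ξ ∈ ∂f_i(x̂)} ⟪ξ, d⟫ < 0`, every objective strictly decreases along `d`,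
and by continuity and convexity also at the feasible points `x̂ + τ_r w_r` approximating `d`,
contradicting weak efficiency. A point `Σ α_i ξ_i = -Σ β_t ζ_t` of `conv F ∩ -G_*` is then
a weak KKT certificate once the cone generators are grouped by their active index.
-/

open Set Filter Topology
open scoped RealInnerProductSpace Pointwise

noncomputable section

namespace MOSIP

variable {n : ℕ} {T : Type*} {p : ℕ}

/-- The decision space `ℝ^n`. -/
abbrev Eucl (n : ℕ) := EuclideanSpace ℝ (Fin n)

/-- Subdifferential of a real-valued function. -/
def subdiff (h : Eucl n → ℝ) (x : Eucl n) : Set (Eucl n) :=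
  {ξ | ∀ y, h x + ⟪ξ, y - x⟫ ≤ h y}

/-- Subdifferential of an extended-real-valued function. -/
def subdiffE (h : Eucl n → EReal) (x : Eucl n) : Set (Eucl n) :=
  {ξ | ∀ y, h x + ((⟪ξ, y - x⟫ : ℝ) : EReal) ≤ h y}

/-- Convexity of an extended-real-valued function. -/
def ConvexE (h : Eucl n → EReal) : Prop :=
  ∀ x y : Eucl n, ∀ a b : ℝ, 0 ≤ a → 0 ≤ b → a + b = 1 →
    h (a • x + b • y) ≤ (a : EReal) * h x + (b : EReal) * h y

/-- Proper (with values in `ℝ ∪ {+∞}`): never `−∞` and not identically `+∞`. -/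
def ProperE (h : Eucl n → EReal) : Prop :=
  (∀ x, h x ≠ ⊥) ∧ (∃ x, h x ≠ ⊤)

/-- Feasible set `S` of the problem `(P)`. -/
def feasSet (g : T → Eucl n → EReal) : Set (Eucl n) := {x | ∀ t, g t x ≤ 0}

/-- Active indices `T(x)`. -/
def activeIx (g : T → Eucl n → EReal) (x : Eucl n) : Set T := {t | g t x = 0}

/-- `ε`-active indices `T_ε(x)`. -/
def activeIxEps (g : T → Eucl n → EReal) (x : Eucl n) (ε : ℝ) : Set T :=
  {t | ((-ε : ℝ) : EReal) ≤ g t x}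

/-- `F(xh) = ⋃ i, ∂f_i(xh)`. -/
def FSet (f : Fin p → Eucl n → ℝ) (x : Eucl n) : Set (Eucl n) := ⋃ i, subdiff (f i) x

/-- `G(xh) = ⋃_{t ∈ T(xh)} ∂g_t(xh)`. -/
def GSet (g : T → Eucl n → EReal) (x : Eucl n) : Set (Eucl n) :=
  ⋃ t ∈ activeIx g x, subdiffE (g t) x

/-- The smallest convex cone containing `M` and `0`: all finite nonnegative combinations. -/
def coneHull (M : Set (Eucl n)) : Set (Eucl n) :=
  {x | ∃ (s : Finset (Eucl n)) (c : Eucl n → ℝ), ↑s ⊆ M ∧ (∀ v ∈ s, 0 ≤ c v) ∧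
    x = ∑ v ∈ s, c v • v}

/-- Negative polar cone `M⁰`. -/
def negPolar (M : Set (Eucl n)) : Set (Eucl n) := {d | ∀ ξ ∈ M, ⟪ξ, d⟫ ≤ 0}

/-- Strictly negative polar cone `M⁻`. -/
def strictNegPolar (M : Set (Eucl n)) : Set (Eucl n) := {d | ∀ ξ ∈ M, ⟪ξ, d⟫ < 0}

/-- Contingent (Bouligand tangent) cone of `M` at `x`. -/
def contingentCone (M : Set (Eucl n)) (x : Eucl n) : Set (Eucl n) :=
  {v | ∃ (τ : ℕ → ℝ) (w : ℕ → Eucl n), (∀ r, 0 < τ r) ∧ Tendsto τ atTop (𝓝 0) ∧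
    Tendsto w atTop (𝓝 v) ∧ ∀ r, x + τ r • w r ∈ M}

/-- Normal cone `N(M, x) := C(M, x)⁰`. -/
def normalCone (M : Set (Eucl n)) (x : Eucl n) : Set (Eucl n) :=
  negPolar (contingentCone M x)

/-- Weak efficient solution. -/
def WeakEff (f : Fin p → Eucl n → ℝ) (S : Set (Eucl n)) (xh : Eucl n) : Prop :=
  ¬ ∃ x ∈ S, ∀ i, f i x < f i xh

/-- Efficient solution. -/
def Eff (f : Fin p → Eucl n → ℝ) (S : Set (Eucl n)) (xh : Eucl n) : Prop :=
  ¬ ∃ x ∈ S, (∀ i, f i x ≤ f i xh) ∧ ∃ j, f j x < f j xh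

/-- Isolated efficient solution with constant `ν`:
`max_i (f_i(x) − f_i(xh)) ≥ ν‖x − xh‖` on `S`. -/
def IsolatedEff (f : Fin p → Eucl n → ℝ) (S : Set (Eucl n)) (xh : Eucl n) (ν : ℝ) : Prop :=
  ∀ x ∈ S, ∃ i, ν * ‖x - xh‖ ≤ f i x - f i xh

/-- `w ∈ Σ α_i ∂f_i(xh) + Σ_{t ∈ T*} β_t ∂g_t(xh)` with multipliers as described,
where `Nonneg`/`Pos` refers to the sign condition on the `α_i`. -/
def KKTPoint (f : Fin p → Eucl n → ℝ) (g : T → Eucl n → EReal) (xh : Eucl n)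
    (w : Eucl n) : Prop :=
  ∃ (α : Fin p → ℝ) (Ts : Finset T) (β : T → ℝ) (ξ : Fin p → Eucl n) (ζ : T → Eucl n),
    (∀ i, 0 ≤ α i) ∧ ∑ i, α i = 1 ∧ (∀ t ∈ Ts, t ∈ activeIx g xh) ∧
    (∀ t ∈ Ts, 0 ≤ β t) ∧ (∀ i, ξ i ∈ subdiff (f i) xh) ∧
    (∀ t ∈ Ts, ζ t ∈ subdiffE (g t) xh) ∧
    ∑ i, α i • ξ i + ∑ t ∈ Ts, β t • ζ t = w

/-- The weak KKT condition at `xh`. -/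
def WeakKKT (f : Fin p → Eucl n → ℝ) (g : T → Eucl n → EReal) (xh : Eucl n) : Prop :=
  KKTPoint f g xh 0

/-- The strong KKT condition at `xh` (all objective multipliers positive). -/
def StrongKKT (f : Fin p → Eucl n → ℝ) (g : T → Eucl n → EReal) (xh : Eucl n) : Prop :=
  ∃ (α : Fin p → ℝ) (Ts : Finset T) (β : T → ℝ) (ξ : Fin p → Eucl n) (ζ : T → Eucl n),
    (∀ i, 0 < α i) ∧ ∑ i, α i = 1 ∧ (∀ t ∈ Ts, t ∈ activeIx g xh) ∧
    (∀ t ∈ Ts, 0 ≤ β t) ∧ (∀ i, ξ i ∈ subdiff (f i) xh) ∧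
    (∀ t ∈ Ts, ζ t ∈ subdiffE (g t) xh) ∧
    ∑ i, α i • ξ i + ∑ t ∈ Ts, β t • ζ t = 0

/-- The perturbed KKT condition at `xh` with constant `ν`. -/
def PerturbedKKT (f : Fin p → Eucl n → ℝ) (g : T → Eucl n → EReal) (xh : Eucl n)
    (ν : ℝ) : Prop :=
  ∀ w : Eucl n, ‖w‖ ≤ ν → KKTPoint f g xh w

/-- The gap function `ϑ(x, ξ, λ) = sup_{y ∈ S} Σ_i λ_i ⟪ξ_i, x − y⟫`. -/
def gapFn (S : Set (Eucl n)) (x : Eucl n) (ξ : Fin p → Eucl n) (lam : Fin p → ℝ) : EReal :=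
  ⨆ y ∈ S, ((∑ i, lam i * ⟪ξ i, x - y⟫ : ℝ) : EReal)

/-- The unit simplex of multipliers. -/
def simplex (lam : Fin p → ℝ) : Prop := (∀ i, 0 ≤ lam i) ∧ ∑ i, lam i = 1

/-- Supremum (marginal) function `ψ(x) = sup_t g_t(x)`. -/
def supFn (g : T → Eucl n → EReal) (x : Eucl n) : EReal := ⨆ t, g t x

/-- Directional derivative of a convex extended-real-valued function,
`h'(x; d) = inf_{τ > 0} (h(x + τ d) − h(x))/τ` (the limit as `τ ↓ 0`). -/
def dirDeriv (h : Eucl n → EReal) (x d : Eucl n) : EReal :=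
  ⨅ τ ∈ Ioi (0 : ℝ), (h (x + τ • d) - h x) * ((τ⁻¹ : ℝ) : EReal)

/-- Every constraint is (real-valued and) continuously differentiable around `xh`,
with gradient `gr t` at `xh`. -/
def SmoothConstraintsAt (g : T → Eucl n → EReal) (gr : T → Eucl n) (xh : Eucl n) : Prop :=
  ∀ t, ∃ (h : Eucl n → ℝ) (U : Set (Eucl n)), U ∈ 𝓝 xh ∧ (∀ y ∈ U, g t y = (h y : EReal)) ∧
    ContDiffOn ℝ 1 h U ∧ gradient h xh = gr t

/-- Slater CQ. -/
def SCQ (g : T → Eucl n → EReal) : Prop := ∃ x₀ : Eucl n, ∀ t, g t x₀ < 0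

/-- Mangasarian–Fromovitz CQ at `xh`. -/
def MFCQ (g : T → Eucl n → EReal) (xh : Eucl n) : Prop :=
  (GSet g xh).Nonempty ∧ (strictNegPolar (GSet g xh)).Nonempty

/-- Perturbed Mangasarian–Fromovitz CQ at `xh`. -/
def PMFCQ (g : T → Eucl n → EReal) (xh : Eucl n) : Prop :=
  ∃ xs : Eucl n,
    (⨅ ε ∈ Ioi (0 : ℝ), ⨆ ξ ∈ ⋃ t ∈ activeIxEps g xh ε, subdiffE (g t) xh,
      ((⟪ξ, xs⟫ : ℝ) : EReal)) < 0

/-- Local Farkas–Minkowski CQ at `xh`. -/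
def LFMCQ (g : T → Eucl n → EReal) (xh : Eucl n) : Prop :=
  normalCone (feasSet g) xh = coneHull (GSet g xh)

/-- Closed cone CQ at `xh`. -/
def CCCQ (g : T → Eucl n → EReal) (xh : Eucl n) : Prop :=
  IsClosed (coneHull (GSet g xh))

/-- Abadie CQ at `xh`. -/
def ACQ (g : T → Eucl n → EReal) (xh : Eucl n) : Prop :=
  (GSet g xh).Nonempty ∧ negPolar (GSet g xh) ⊆ contingentCone (feasSet g) xh

/-- Kuhn–Tucker CQ at `xh`. -/
def KTCQ (g : T → Eucl n → EReal) (xh : Eucl n) : Prop :=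
  {d | dirDeriv (supFn g) xh d ≤ 0} ⊆ contingentCone (feasSet g) xh

/-- Pshenichnyi–Levin–Valadier CQ at `xh`. -/
def PLVCQ (g : T → Eucl n → EReal) (xh : Eucl n) : Prop :=
  subdiffE (supFn g) xh ⊆ coneHull (GSet g xh)

/-- Weak Abadie DQ at `xh`. -/
def WADQ (f : Fin p → Eucl n → ℝ) (g : T → Eucl n → EReal) (xh : Eucl n) : Prop :=
  (GSet g xh).Nonempty ∧
    strictNegPolar (FSet f xh) ∩ negPolar (GSet g xh) ⊆ contingentCone (feasSet g) xh

/-- The sublevel sets `Q^i(xh)`. -/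
def QSet (f : Fin p → Eucl n → ℝ) (S : Set (Eucl n)) (xh : Eucl n) (i : Fin p) :
    Set (Eucl n) :=
  {x ∈ S | ∀ l, l ≠ i → f l x ≤ f l xh}

/-- Extended Abadie DQ at `xh`. -/
def EADQ (f : Fin p → Eucl n → ℝ) (g : T → Eucl n → EReal) (xh : Eucl n) : Prop :=
  (GSet g xh).Nonempty ∧
    negPolar (FSet f xh) ∩ negPolar (GSet g xh) ⊆
      ⋂ i, contingentCone (QSet f (feasSet g) xh i) xh

/-- Maeda objective qualification at `xh`. -/
def MOQ (f : Fin p → Eucl n → ℝ) (xh : Eucl n) : Prop :=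
  negPolar (FSet f xh) ⊆ {0} ∪ ⋃ i, strictNegPolar (subdiff (f i) xh)

variable {n p : ℕ} {T : Type*}

theorem _root_.Convex.exists_sum_smul_eq {ι E : Type*} [AddCommGroup E] [Module ℝ E] {C : Set E}
    (hC : Convex ℝ C) {u : Finset ι} (hu : u.Nonempty) {w : ι → ℝ} {z : ι → E}
    (hw : ∀ i ∈ u, 0 ≤ w i) (hz : ∀ i ∈ u, z i ∈ C) :
    ∃ y ∈ C, ∑ i ∈ u, w i • z i = (∑ i ∈ u, w i) • y := by
  rcases (Finset.sum_nonneg hw).eq_or_lt with h | h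
  · obtain ⟨i, hi⟩ := hu
    refine ⟨z i, hz i hi, ?_⟩
    rw [← h, zero_smul]
    exact Finset.sum_eq_zero fun j hj => by
      rw [(Finset.sum_eq_zero_iff_of_nonneg hw).1 h.symm j hj, zero_smul]
  · exact ⟨u.centerMass w z, hC.centerMass_mem hw h hz, by
      rw [Finset.centerMass, smul_inv_smul₀ h.ne']⟩

section ConvexHull

variable {ι E : Type*} [Fintype ι] [AddCommGroup E] [Module ℝ E] {C : ι → Set E}

theorem convexHull_iUnion_eq_image (hconv : ∀ i, Convex ℝ (C i)) (hne : ∀ i, (C i).Nonempty) :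
    convexHull ℝ (⋃ i, C i) = (fun q : (ι → ℝ) × (ι → E) => ∑ i, q.1 i • q.2 i) ''
      (stdSimplex ℝ ι ×ˢ univ.pi C) := by
  classical
  refine (convexHull_min ?_ ?_).antisymm ?_
  · choose ξ₀ hξ₀ using hne
    refine iUnion_subset fun i ξ hξ => ⟨(Pi.single i 1, Function.update ξ₀ i ξ),
      ⟨single_mem_stdSimplex ℝ i, fun j _ => ?_⟩, ?_⟩
    · rcases eq_or_ne j i with rfl | hj
      · simpa using hξ
      · simpa [hj] using hξ₀ j
    · simp [Pi.single_apply]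
  · rintro _ ⟨⟨α, ξ⟩, ⟨hα, hξ⟩, rfl⟩ _ ⟨⟨β, η⟩, ⟨hβ, hη⟩, rfl⟩ a b ha hb hab
    choose ζ hζ hζeq using fun i => (hconv i).exists_mem_add_smul_eq (hξ i trivial)
      (hη i trivial) (mul_nonneg ha (hα.1 i)) (mul_nonneg hb (hβ.1 i))
    refine ⟨(a • α + b • β, ζ), ⟨convex_stdSimplex ℝ ι hα hβ ha hb hab, fun i _ => hζ i⟩, ?_⟩
    simp only [Pi.add_apply, Pi.smul_apply, smul_eq_mul, hζeq, Finset.smul_sum,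
      ← Finset.sum_add_distrib, mul_smul]
  · rintro _ ⟨⟨α, ξ⟩, ⟨hα, hξ⟩, rfl⟩
    exact (convex_convexHull ℝ _).sum_mem (fun i _ => hα.1 i) hα.2 fun i _ =>
      subset_convexHull ℝ _ (mem_iUnion.2 ⟨i, hξ i trivial⟩)

theorem isCompact_convexHull_iUnion [TopologicalSpace E] [ContinuousAdd E] [ContinuousSMul ℝ E]
    (hconv : ∀ i, Convex ℝ (C i)) (hne : ∀ i, (C i).Nonempty) (hcomp : ∀ i, IsCompact (C i)) :
    IsCompact (convexHull ℝ (⋃ i, C i)) := by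
  rw [convexHull_iUnion_eq_image hconv hne]
  exact ((isCompact_stdSimplex ℝ ι).prod (isCompact_univ_pi hcomp)).image (by fun_prop)

end ConvexHull

section RightLineDeriv

variable {E : Type*} [AddCommGroup E] [Module ℝ E] {f : E → ℝ}

theorem _root_.ConvexOn.comp_line (hf : ConvexOn ℝ univ f) (x v : E) :
    ConvexOn ℝ univ fun τ : ℝ => f (x + τ • v) := by
  refine ⟨convex_univ, fun a _ b _ α β hα hβ hαβ => ?_⟩
  obtain rfl : β = 1 - α := by linarith
  convert hf.2 (mem_univ (x + a • v)) (mem_univ (x + b • v)) hα hβ hαβ using 2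
  simp only [smul_eq_mul]
  module

theorem _root_.ConvexOn.apply_add_smul_lt_of_le (hf : ConvexOn ℝ univ f) {x v : E} {σ τ : ℝ}
    (hσ : 0 < σ) (hστ : σ ≤ τ) (h : f (x + τ • v) < f x) : f (x + σ • v) < f x := by
  rcases hστ.eq_or_lt with rfl | hlt
  · exact h
  by_contra! hge
  have hseg : σ ∈ openSegment ℝ 0 τ := by
    rw [openSegment_eq_Ioo (hσ.trans hlt)]
    exact ⟨hσ, hlt⟩
  have := (hf.comp_line x v).lt_left_of_right_lt trivial trivial hseg (h.trans_le hge)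
  simp only [zero_smul, add_zero] at this
  exact this.not_ge hge

theorem tendsto_const_mul_nhdsGT_zero {c : ℝ} (hc : 0 < c) :
    Tendsto (fun τ : ℝ => c * τ) (𝓝[>] 0) (𝓝[>] 0) :=
  tendsto_nhdsWithin_iff.2
    ⟨by simpa using ((continuous_const_mul c).tendsto 0).mono_left nhdsWithin_le_nhds,
      eventually_nhdsWithin_of_forall fun _ hτ => mul_pos hc hτ⟩

def rightLineDeriv (f : E → ℝ) (x v : E) : ℝ :=
  derivWithin (fun τ : ℝ => f (x + τ • v)) (Ioi 0) 0

theorem tendsto_rightLineDeriv (hf : ConvexOn ℝ univ f) (x v : E) :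
    Tendsto (fun τ : ℝ => (f (x + τ • v) - f x) / τ) (𝓝[>] 0) (𝓝 (rightLineDeriv f x v)) := by
  have h := (hasDerivWithinAt_iff_tendsto_slope' self_notMem_Ioi).1
    ((hf.comp_line x v).hasDerivWithinAt_rightDeriv_of_mem_interior (x := 0) (by simp))
  rw [rightLineDeriv]
  convert h using 2 with τ
  simp [slope_def_field]

theorem rightLineDeriv_le_sub (hf : ConvexOn ℝ univ f) (x v : E) :
    rightLineDeriv f x v ≤ f (x + v) - f x := by
  simpa [rightLineDeriv, slope_def_field] using
    (hf.comp_line x v).rightDeriv_le_slope_of_mem_interior (x := 0) (by simp) trivial one_pos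

@[simp]
theorem rightLineDeriv_zero (f : E → ℝ) (x : E) : rightLineDeriv f x 0 = 0 := by
  simp [rightLineDeriv]

theorem rightLineDeriv_smul (hf : ConvexOn ℝ univ f) (x v : E) {c : ℝ} (hc : 0 < c) :
    rightLineDeriv f x (c • v) = c * rightLineDeriv f x v := by
  have hscaled :=
    ((tendsto_rightLineDeriv hf x v).comp (tendsto_const_mul_nhdsGT_zero hc)).const_mul c
  refine tendsto_nhds_unique (tendsto_rightLineDeriv hf x (c • v)) (hscaled.congr' ?_)
  filter_upwards [self_mem_nhdsWithin] with τ (hτ : 0 < τ)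
  simp only [Function.comp_apply, smul_smul]
  field_simp

theorem rightLineDeriv_add_le (hf : ConvexOn ℝ univ f) (x v w : E) :
    rightLineDeriv f x (v + w) ≤ rightLineDeriv f x v + rightLineDeriv f x w := by
  have hdbl := tendsto_const_mul_nhdsGT_zero (two_pos : (0 : ℝ) < 2)
  refine le_of_tendsto_of_tendsto (tendsto_rightLineDeriv hf x (v + w))
    (((tendsto_rightLineDeriv hf x v).comp hdbl).add
      ((tendsto_rightLineDeriv hf x w).comp hdbl)) ?_
  filter_upwards [self_mem_nhdsWithin] with τ (hτ : 0 < τ)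
  have hmid := hf.2 (mem_univ (x + (2 * τ) • v)) (mem_univ (x + (2 * τ) • w))
    (by norm_num : (0 : ℝ) ≤ 1 / 2) (by norm_num : (0 : ℝ) ≤ 1 / 2) (by norm_num)
  have hpt : (1 / 2 : ℝ) • (x + (2 * τ) • v) + (1 / 2 : ℝ) • (x + (2 * τ) • w) =
      x + τ • (v + w) := by module
  rw [hpt, smul_eq_mul, smul_eq_mul] at hmid
  simp only [Function.comp_apply]
  rw [← add_div, div_le_div_iff₀ hτ (by positivity)]
  nlinarith

theorem mul_rightLineDeriv_le (hf : ConvexOn ℝ univ f) (x v : E) (c : ℝ) :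
    c * rightLineDeriv f x v ≤ rightLineDeriv f x (c • v) := by
  rcases lt_trichotomy c 0 with hc | rfl | hc
  · have h := rightLineDeriv_add_le hf x (c • v) ((-c) • v)
    rw [← add_smul, add_neg_cancel, zero_smul, rightLineDeriv_zero,
      rightLineDeriv_smul hf x v (neg_pos.2 hc)] at h
    linarith
  · simp
  · rw [rightLineDeriv_smul hf x v hc]

/-- Hahn–Banach applied to the sublinear functional `f'(x; ·)`; this is the max formula. -/
theorem exists_linearMap_le_rightLineDeriv (hf : ConvexOn ℝ univ f) (x d : E) :
    ∃ ℓ : E →ₗ[ℝ] ℝ, ℓ d = rightLineDeriv f x d ∧ ∀ v, ℓ v ≤ rightLineDeriv f x v := by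
  have H : ∀ c : ℝ, c • d = 0 → (RingHom.id ℝ) c • rightLineDeriv f x d = 0 := by
    intro c hcd
    rcases smul_eq_zero.1 hcd with rfl | rfl <;> simp
  have hle : ∀ z : (LinearPMap.mkSpanSingleton' d (rightLineDeriv f x d) H).domain,
      LinearPMap.mkSpanSingleton' d (rightLineDeriv f x d) H z ≤ rightLineDeriv f x z := by
    rintro ⟨_, hz⟩
    obtain ⟨c, rfl⟩ := Submodule.mem_span_singleton.1 hz
    rw [LinearPMap.mkSpanSingleton'_apply]
    exact mul_rightLineDeriv_le hf x d c
  obtain ⟨ℓ, hℓd, hℓ⟩ := exists_extension_of_le_sublinear _ (rightLineDeriv f x)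
    (fun c hc v => rightLineDeriv_smul hf x v hc) (rightLineDeriv_add_le hf x) hle
  exact ⟨ℓ, (hℓd ⟨d, Submodule.mem_span_singleton_self d⟩).trans
    (LinearPMap.mkSpanSingleton'_apply_self _ _ _ _), hℓ⟩

end RightLineDeriv

section Subdifferential

variable {f : Eucl n → ℝ}

theorem exists_mem_subdiff_inner_eq_rightLineDeriv (hf : ConvexOn ℝ univ f) (x d : Eucl n) :
    ∃ ξ ∈ subdiff f x, ⟪ξ, d⟫ = rightLineDeriv f x d := by
  obtain ⟨ℓ, hℓd, hℓ⟩ := exists_linearMap_le_rightLineDeriv hf x d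
  set ξ := (InnerProductSpace.toDual ℝ (Eucl n)).symm (LinearMap.toContinuousLinearMap ℓ)
  have hξ : ∀ y, ⟪ξ, y⟫ = ℓ y := fun y => InnerProductSpace.toDual_symm_apply
  refine ⟨ξ, fun y => ?_, by rw [hξ, hℓd]⟩
  have := (hℓ (y - x)).trans (rightLineDeriv_le_sub hf x (y - x))
  rw [add_sub_cancel] at this
  rw [hξ]
  linarith

theorem subdiff_nonempty (hf : ConvexOn ℝ univ f) (x : Eucl n) : (subdiff f x).Nonempty :=
  let ⟨ξ, hξ, _⟩ := exists_mem_subdiff_inner_eq_rightLineDeriv hf x 0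
  ⟨ξ, hξ⟩

theorem convex_subdiff (f : Eucl n → ℝ) (x : Eucl n) : Convex ℝ (subdiff f x) := by
  intro ξ hξ ζ hζ a b ha hb hab y
  rw [inner_add_left, real_inner_smul_left, real_inner_smul_left]
  linear_combination mul_le_mul_of_nonneg_left (hξ y) ha + mul_le_mul_of_nonneg_left (hζ y) hb +
    (f y - f x) * hab

theorem isClosed_subdiff (f : Eucl n → ℝ) (x : Eucl n) : IsClosed (subdiff f x) := by
  have : subdiff f x = ⋂ y, {ξ | f x + ⟪ξ, y - x⟫ ≤ f y} := by
    ext ξ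
    simp [subdiff]
  rw [this]
  exact isClosed_iInter fun y => isClosed_le (by fun_prop) continuous_const

theorem isCompact_subdiff (hf : ConvexOn ℝ univ f) (x : Eucl n) : IsCompact (subdiff f x) := by
  have hcont : Continuous f := continuousOn_univ.1 (hf.continuousOn isOpen_univ)
  obtain ⟨M, hM⟩ := (isCompact_closedBall x 1).bddAbove_image hcont.continuousOn
  refine Metric.isCompact_of_isClosed_isBounded (isClosed_subdiff f x)
    (isBounded_iff_forall_norm_le.2 ⟨M - f x, fun ξ hξ => ?_⟩)
  rcases eq_or_ne ξ 0 with rfl | hξ0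
  · simpa using hM (mem_image_of_mem f (Metric.mem_closedBall_self zero_le_one))
  have hy : x + ‖ξ‖⁻¹ • ξ ∈ Metric.closedBall x 1 := by
    rw [Metric.mem_closedBall, dist_self_add_left, norm_smul, norm_inv, norm_norm,
      inv_mul_cancel₀ (norm_ne_zero_iff.2 hξ0)]
  have hinner : ⟪ξ, x + ‖ξ‖⁻¹ • ξ - x⟫ = ‖ξ‖ := by
    rw [add_sub_cancel_left, real_inner_smul_right, real_inner_self_eq_norm_sq]
    field_simp
  linarith [hξ (x + ‖ξ‖⁻¹ • ξ), hM (mem_image_of_mem f hy)]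

theorem exists_pos_lt_of_forall_inner_neg (hf : ConvexOn ℝ univ f) {x d : Eucl n}
    (hd : ∀ ξ ∈ subdiff f x, ⟪ξ, d⟫ < 0) : ∃ τ > (0 : ℝ), f (x + τ • d) < f x := by
  obtain ⟨ξ, hξ, hξd⟩ := exists_mem_subdiff_inner_eq_rightLineDeriv hf x d
  have hneg : rightLineDeriv f x d < 0 := hξd ▸ hd ξ hξ
  obtain ⟨τ, hq, hτ⟩ := (((tendsto_rightLineDeriv hf x d).eventually
    (gt_mem_nhds hneg)).and self_mem_nhdsWithin).exists
  refine ⟨τ, hτ, ?_⟩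
  rwa [div_lt_iff₀ hτ, zero_mul, sub_neg] at hq

theorem eventually_lt_of_forall_inner_neg (hf : ConvexOn ℝ univ f) {x d : Eucl n}
    (hd : ∀ ξ ∈ subdiff f x, ⟪ξ, d⟫ < 0) {ι : Type*} {l : Filter ι} {τ : ι → ℝ}
    {w : ι → Eucl n} (hτpos : ∀ r, 0 < τ r) (hτ : Tendsto τ l (𝓝 0)) (hw : Tendsto w l (𝓝 d)) :
    ∀ᶠ r in l, f (x + τ r • w r) < f x := by
  obtain ⟨σ, hσ, hlt⟩ := exists_pos_lt_of_forall_inner_neg hf hd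
  have hcont : Continuous fun u => f (x + σ • u) :=
    (continuousOn_univ.1 (hf.continuousOn isOpen_univ)).comp (by fun_prop)
  filter_upwards [((hcont.tendsto d).comp hw).eventually_lt_const hlt,
    hτ.eventually_lt_const hσ] with r h1 h2
  exact hf.apply_add_smul_lt_of_le (hτpos r) h2.le h1

end Subdifferential

theorem convex_subdiffE {g : Eucl n → EReal} {x : Eucl n} {r : ℝ} (hx : g x = r) :
    Convex ℝ (subdiffE g x) := by
  intro ξ hξ ζ hζ a b ha hb hab y
  have h₁ := hξ y
  have h₂ := hζ y
  rw [hx] at h₁ h₂ ⊢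
  generalize g y = s at h₁ h₂ ⊢
  induction s using EReal.rec with
  | bot =>
    rw [le_bot_iff, ← EReal.coe_add] at h₁
    exact absurd h₁ (EReal.coe_ne_bot _)
  | coe s =>
    rw [← EReal.coe_add, EReal.coe_le_coe_iff] at h₁ h₂ ⊢
    rw [inner_add_left, real_inner_smul_left, real_inner_smul_left]
    linear_combination mul_le_mul_of_nonneg_left h₁ ha + mul_le_mul_of_nonneg_left h₂ hb +
      (s - r) * hab
  | top => exact le_top

theorem zero_mem_coneHull (M : Set (Eucl n)) : (0 : Eucl n) ∈ coneHull M :=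
  ⟨∅, 0, by simp, by simp, by simp⟩

theorem subset_coneHull (M : Set (Eucl n)) : M ⊆ coneHull M := fun z hz =>
  ⟨{z}, 1, by simpa using hz, fun _ _ => zero_le_one, by simp⟩

theorem smul_mem_coneHull {M : Set (Eucl n)} {c : ℝ} (hc : 0 ≤ c) {z : Eucl n}
    (hz : z ∈ coneHull M) : c • z ∈ coneHull M := by
  obtain ⟨s, w, hs, hw, rfl⟩ := hz
  exact ⟨s, c • w, hs, fun v hv => mul_nonneg hc (hw v hv), by simp [Finset.smul_sum, smul_smul]⟩

theorem add_mem_coneHull {M : Set (Eucl n)} {y z : Eucl n} (hy : y ∈ coneHull M)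
    (hz : z ∈ coneHull M) : y + z ∈ coneHull M := by
  classical
  obtain ⟨s, c, hs, hc, rfl⟩ := hy
  obtain ⟨t, d, ht, hd, rfl⟩ := hz
  refine ⟨s ∪ t, fun v => (if v ∈ s then c v else 0) + (if v ∈ t then d v else 0), ?_, ?_, ?_⟩
  · simpa using union_subset hs ht
  · intro v _
    refine add_nonneg ?_ ?_ <;> split_ifs with h
    exacts [hc v h, le_rfl, hd v h, le_rfl]
  · simp [add_smul, ite_smul, Finset.sum_add_distrib, Finset.sum_ite_mem]

theorem convex_coneHull (M : Set (Eucl n)) : Convex ℝ (coneHull M) :=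
  fun _ hy _ hz _ _ ha hb _ => add_mem_coneHull (smul_mem_coneHull ha hy) (smul_mem_coneHull hb hz)

theorem exists_sum_smul_eq_of_mem_coneHull_biUnion {I : Set T} {C : T → Set (Eucl n)}
    (hC : ∀ t ∈ I, Convex ℝ (C t)) {x : Eucl n} (hx : x ∈ coneHull (⋃ t ∈ I, C t)) :
    ∃ (Ts : Finset T) (β : T → ℝ) (ζ : T → Eucl n), (∀ t ∈ Ts, t ∈ I) ∧ (∀ t ∈ Ts, 0 ≤ β t) ∧
      (∀ t ∈ Ts, ζ t ∈ C t) ∧ ∑ t ∈ Ts, β t • ζ t = x := by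
  classical
  obtain ⟨s, c, hs, hc, rfl⟩ := hx
  rcases s.eq_empty_or_nonempty with rfl | ⟨v₀, hv₀⟩
  · exact ⟨∅, 0, 0, by simp, by simp, by simp, by simp⟩
  obtain ⟨t₀, -⟩ : ∃ t ∈ I, v₀ ∈ C t := by simpa using hs hv₀
  have : Nonempty T := ⟨t₀⟩
  have hindex : ∀ v ∈ s, ∃ t ∈ I, v ∈ C t := fun v hv => by simpa using hs hv
  choose! τ hτI hτC using hindex
  have hfiber : ∀ t ∈ s.image τ, ∃ z ∈ C t,
      ∑ v ∈ s with τ v = t, c v • v = (∑ v ∈ s with τ v = t, c v) • z := by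
    intro t ht
    obtain ⟨v, hv, hvt⟩ := Finset.mem_image.1 ht
    refine (hC t (hvt ▸ hτI v hv)).exists_sum_smul_eq ⟨v, Finset.mem_filter.2 ⟨hv, hvt⟩⟩
      (fun u hu => hc u (Finset.mem_filter.1 hu).1) fun u hu => ?_
    obtain ⟨hus, rfl⟩ := Finset.mem_filter.1 hu
    exact hτC u hus
  choose! ζ hζC hζ using hfiber
  refine ⟨s.image τ, fun t => ∑ v ∈ s with τ v = t, c v, ζ, ?_,
    fun t _ => Finset.sum_nonneg fun v hv => hc v (Finset.mem_filter.1 hv).1, hζC, ?_⟩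
  · simpa using hτI
  · rw [← Finset.sum_fiberwise_of_maps_to fun v hv => Finset.mem_image_of_mem τ hv]
    exact Finset.sum_congr rfl fun t ht => (hζ t ht).symm

theorem exists_mem_strictNegPolar_negPolar_of_disjoint {A M : Set (Eucl n)} (hAconv : Convex ℝ A)
    (hAcomp : IsCompact A) (hM : IsClosed (coneHull M)) (hdisj : Disjoint A (-coneHull M)) :
    ∃ d, d ∈ strictNegPolar A ∧ d ∈ negPolar M := by
  obtain ⟨ℓ, u, v, hA, huv, hK⟩ := geometric_hahn_banach_compact_closed hAconv hAcomp
    (convex_coneHull M).neg hM.neg hdisj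
  have hv : v < 0 := by simpa using hK 0 (by simpa using zero_mem_coneHull M)
  set d := (InnerProductSpace.toDual ℝ (Eucl n)).symm ℓ
  have hd : ∀ y, ⟪y, d⟫ = ℓ y := fun y => by
    rw [real_inner_comm]
    exact InnerProductSpace.toDual_symm_apply
  refine ⟨d, fun a ha => by linarith [hd a, hA a ha], fun η hη => ?_⟩
  rw [hd]
  by_contra! hpos
  -- `ℓ` is bounded below by `v` on `-coneHull M`, which contains all `-(c • η)`, `c ≥ 0`
  have hscaled := hK (-((-v / ℓ η) • η)) (by
    rw [Set.mem_neg, neg_neg]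
    exact smul_mem_coneHull (div_pos (neg_pos.2 hv) hpos).le (subset_coneHull M hη))
  rw [map_neg, map_smul, smul_eq_mul, div_mul_cancel₀ _ hpos.ne'] at hscaled
  linarith

theorem notMem_contingentCone_of_weakEff {f : Fin p → Eucl n → ℝ} {S : Set (Eucl n)}
    {xh d : Eucl n} (hf : ∀ i, ConvexOn ℝ univ (f i)) (hweak : WeakEff f S xh)
    (hd : d ∈ strictNegPolar (FSet f xh)) : d ∉ contingentCone S xh := by
  rintro ⟨τ, w, hτpos, hτ, hw, hS⟩
  have hlt : ∀ᶠ r in atTop, ∀ i, f i (xh + τ r • w r) < f i xh :=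
    eventually_all.2 fun i => eventually_lt_of_forall_inner_neg (hf i)
      (fun ξ hξ => hd ξ (mem_iUnion.2 ⟨i, hξ⟩)) hτpos hτ hw
  obtain ⟨r, hr⟩ := hlt.exists
  exact hweak ⟨_, hS r, hr⟩

theorem stmt2_general
    (f : Fin p → Eucl n → ℝ) (g : T → Eucl n → EReal)
    (hf : ∀ i, ConvexOn ℝ Set.univ (f i))
    (xh : Eucl n)
    (hweak : WeakEff f (feasSet g) xh)
    (hwadq : WADQ f g xh) (hcccq : CCCQ g xh) :
    WeakKKT f g xh := by
  have hconv : ∀ i, Convex ℝ (subdiff (f i) xh) := fun i => convex_subdiff (f i) xh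
  have hne : ∀ i, (subdiff (f i) xh).Nonempty := fun i => subdiff_nonempty (hf i) xh
  obtain ⟨w, hwF, hwG⟩ : (convexHull ℝ (FSet f xh) ∩ -coneHull (GSet g xh)).Nonempty := by
    rw [← not_disjoint_iff_nonempty_inter]
    intro hdisj
    obtain ⟨d, hdF, hdG⟩ := exists_mem_strictNegPolar_negPolar_of_disjoint
      (convex_convexHull ℝ _)
      (isCompact_convexHull_iUnion hconv hne fun i => isCompact_subdiff (hf i) xh) hcccq hdisj
    have hd : d ∈ strictNegPolar (FSet f xh) := fun ξ hξ => hdF ξ (subset_convexHull ℝ _ hξ)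
    exact notMem_contingentCone_of_weakEff hf hweak hd (hwadq.2 ⟨hd, hdG⟩)
  obtain ⟨⟨α, ξ⟩, ⟨hα, hξ⟩, rfl⟩ := (convexHull_iUnion_eq_image hconv hne).subset hwF
  obtain ⟨Ts, β, ζ, hTs, hβ, hζ, hsum⟩ := exists_sum_smul_eq_of_mem_coneHull_biUnion
    (fun t (ht : g t xh = 0) => convex_subdiffE (ht.trans EReal.coe_zero.symm)) hwG
  exact ⟨α, Ts, β, ξ, ζ, hα.1, hα.2, hTs, hβ, fun i => hξ i trivial, hζ, by
    rw [hsum]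
    exact add_neg_cancel _⟩

/-- If `x̂ ∈ S` is a weak efficient solution of `(P)` and both WADQ and CCCQ
hold at `x̂`, then the weak KKT condition holds at `x̂`. -/
theorem stmt2
    (hn : 1 ≤ n) (hp : 1 ≤ p)
    (f : Fin p → Eucl n → ℝ) (g : T → Eucl n → EReal)
    (hf : ∀ i, ConvexOn ℝ Set.univ (f i))
    (hgconv : ∀ t, ConvexE (g t))
    (hgproper : ∀ t, ProperE (g t))
    (hglsc : ∀ t, LowerSemicontinuous (g t))
    (xh : Eucl n) (hxS : xh ∈ feasSet g)
    (hweak : WeakEff f (feasSet g) xh)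
    (hwadq : WADQ f g xh) (hcccq : CCCQ g xh) :
    WeakKKT f g xh :=
  stmt2_general f g hf xh hweak hwadq hcccq

end MOSIP
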